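/- Improving predictor via selected ERM (finite classes): let S_n be i.i.d. from the Noisy Generative Process, f* ∈ F, g* ∈ G finite. Suppose ĝ ∈ G satisfies E_x[1{g*(x) ≠ ĝ(x)}] ≤ ε, and let f̃ = argmin_{f∈F} (1/n)Σᵢ 1{ĝ(xᵢ)>0}·1{f(xᵢ)≠yᵢ}. If n ≥ max(24·log(|G|/δ)/ε, 12·log(|F|/δ)/ε), then with probability at least 1-3δ (combining the required concentration events): E_x[1{f̃(x) ≠ f*(x)} | g*(x) = 1] ≤ C·ε/α for an absolute constant C, where α = P[g*(x) = 1]. -/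

import Mathlib

open MeasureTheory

open Classical in
/-- Real-valued indicator of a proposition. -/
noncomputable def ind (P : Prop) : ℝ := if P then 1 else 0

/-- Joint law of `(x, y)` for the Noisy Generative Process:
`x ∼ μ` and, given `x`, `y = f*(x)` with probability `3/4 + g*(x)·λ(x)/2`
and `y = -f*(x)` with probability `1/4 - g*(x)·λ(x)/2`. -/
noncomputable def noisyJoint {X : Type*} [MeasurableSpace X] (μ : Measure X)
    (lam gstar fstar : X → ℝ) : Measure (X × ℝ) :=
  μ.bind fun x =>
    ENNReal.ofReal (3 / 4 + gstar x * lam x / 2) • Measure.dirac (x, fstar x)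
    + ENNReal.ofReal (1 / 4 - gstar x * lam x / 2) • Measure.dirac (x, -(fstar x))

lemma ind_true {P : Prop} (h : P) : ind P = 1 := by simp [ind, h]
lemma ind_false {P : Prop} (h : ¬ P) : ind P = 0 := by simp [ind, h]
lemma ind_nonneg (P : Prop) : 0 ≤ ind P := by
  by_cases h : P
  · simp [ind_true h]
  · simp [ind_false h]
lemma ind_le_one (P : Prop) : ind P ≤ 1 := by
  by_cases h : P
  · simp [ind_true h]
  · simp [ind_false h]
lemma ind_cases (P : Prop) : ind P = 0 ∨ ind P = 1 := by
  by_cases h : P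
  · exact Or.inr (ind_true h)
  · exact Or.inl (ind_false h)
lemma abs_ind_le_one (P : Prop) : |ind P| ≤ 1 := by
  rw [abs_le]; exact ⟨by linarith [ind_nonneg P], ind_le_one P⟩

lemma ind_ne_self (a : ℝ) : ind (a ≠ a) = 0 := ind_false (by simp)

lemma ind_ne_neg {a b : ℝ} (ha : a = 1 ∨ a = -1) (hb : b = 1 ∨ b = -1) :
    ind (a ≠ -b) = 1 - ind (a ≠ b) := by
  rcases ha with h | h <;> rcases hb with h' | h' <;> rw [h, h'] <;> norm_num [ind]

lemma ind_ne_neg_self {a : ℝ} (ha : a = 1 ∨ a = -1) : ind (a ≠ -a) = 1 := by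
  rcases ha with h | h <;> rw [h] <;> norm_num [ind]

lemma ind_pos_iff {a : ℝ} (ha : a = 1 ∨ a = -1) : ind (0 < a) = ind (a = 1) := by
  rcases ha with h | h <;> rw [h] <;> norm_num [ind]

lemma unit_bounds {a b : ℝ} (ha0 : 0 ≤ a) (ha1 : a ≤ 1) (hb0 : 0 ≤ b) (hb1 : b ≤ 1) :
    0 ≤ a * b ∧ a * b ≤ 1 :=
  ⟨mul_nonneg ha0 hb0, by nlinarith⟩

lemma abs_le_one_of_unit {a : ℝ} (h0 : 0 ≤ a) (h1 : a ≤ 1) : |a| ≤ 1 :=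
  abs_le.2 ⟨by linarith, h1⟩

lemma convex_bound {q a b : ℝ} (hq0 : 0 ≤ q) (hq1 : q ≤ 1) (ha : 0 ≤ a) (ha1 : a ≤ 1)
    (hb : 0 ≤ b) (hb1 : b ≤ 1) : |q * a + (1 - q) * b| ≤ 1 := by
  rw [abs_le]
  constructor <;> nlinarith

lemma measurable_ind {α : Type*} [MeasurableSpace α] {P : α → Prop}
    (h : MeasurableSet {x | P x}) : Measurable fun x => ind (P x) := by
  have : (fun x => ind (P x)) = Set.indicator {x | P x} (fun _ => (1:ℝ)) := by
    funext x
    by_cases hx : P x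
    · rw [ind_true hx]
      exact (Set.indicator_of_mem hx (fun _ => (1:ℝ))).symm
    · rw [ind_false hx]
      exact (Set.indicator_of_notMem hx (fun _ => (1:ℝ))).symm
  rw [this]
  exact measurable_const.indicator h

lemma exp_le_quad {z : ℝ} (hz : z ≤ 1) : Real.exp z ≤ 1 + z + z ^ 2 := by
  rcases le_or_gt (-1) z with h | h
  · have habs : |z| ≤ 1 := abs_le.2 ⟨h, hz⟩
    have := Real.exp_bound habs (n := 2) (by norm_num)
    have hsum : ∑ i ∈ Finset.range 2, z ^ i / (Nat.factorial i) = 1 + z := by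
      simp [Finset.sum_range_succ, Nat.factorial]
    rw [hsum] at this
    have h2 : Real.exp z - (1 + z) ≤ |z| ^ 2 * ((Nat.succ 2) / (Nat.factorial 2 * 2)) :=
      le_trans (le_abs_self _) this
    have : Real.exp z ≤ 1 + z + |z| ^ 2 * (3 / 4) := by
      have : ((Nat.factorial 2 : ℝ) * 2) = 4 := by norm_num [Nat.factorial]
      rw [this] at h2; push_cast at h2 ⊢; linarith
    calc Real.exp z ≤ 1 + z + |z| ^ 2 * (3 / 4) := this
      _ ≤ 1 + z + z ^ 2 := by rw [sq_abs]; nlinarith [sq_nonneg z]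
  · have h1 : Real.exp z < 1 := Real.exp_lt_one_iff.2 (by linarith)
    nlinarith [sq_nonneg z]

lemma integrable_bdd {α : Type*} [MeasurableSpace α] {m : Measure α} [IsFiniteMeasure m]
    {f : α → ℝ} (hf : Measurable f) (c : ℝ) (h : ∀ x, |f x| ≤ c) : Integrable f m :=
  (integrable_const c).mono' hf.aestronglyMeasurable (Filter.Eventually.of_forall h)

lemma integrable_exp_mul {α : Type*} [MeasurableSpace α] {m : Measure α} [IsFiniteMeasure m]
    {f : α → ℝ} (hf : Measurable f) (hb : ∀ x, |f x| ≤ 1) (t : ℝ) :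
    Integrable (fun x => Real.exp (t * f x)) m := by
  apply integrable_bdd (Real.measurable_exp.comp (measurable_const.mul hf)) (Real.exp |t|)
  intro x
  show |Real.exp (t * f x)| ≤ Real.exp |t|
  rw [abs_of_pos (Real.exp_pos _), Real.exp_le_exp]
  calc t * f x ≤ |t * f x| := le_abs_self _
    _ = |t| * |f x| := abs_mul _ _
    _ ≤ |t| * 1 := by nlinarith [abs_nonneg t, hb x]
    _ = |t| := mul_one _

/-- Generic Chernoff bound for i.i.d. bounded variables. -/
lemma chernoff {α : Type*} [MeasurableSpace α] (m : Measure α) [IsProbabilityMeasure m]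
    (n : ℕ) (Y : α → ℝ) (hY : Measurable Y) (hb : ∀ s, |Y s| ≤ 1)
    {t : ℝ} (ht0 : 0 < t) (a M : ℝ)
    (hM : ∫ s, Real.exp (t * Y s) ∂m ≤ M) :
    ((Measure.pi fun _ : Fin n => m) {S | a ≤ ∑ k, Y (S k)}).toReal
      ≤ Real.exp (-(t * a)) * M ^ n := by
  letI : MeasureSpace α := ⟨m⟩
  set P : Measure (Fin n → α) := Measure.pi fun _ : Fin n => m with hP
  haveI : IsProbabilityMeasure P := by rw [hP]; infer_instance
  set f : (Fin n → α) → ℝ := fun S => Real.exp (t * ∑ k, Y (S k)) with hf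
  have hfm : Measurable f := by
    apply Real.measurable_exp.comp
    exact measurable_const.mul (Finset.measurable_sum _ fun k _ => hY.comp (measurable_pi_apply k))
  have hfint : Integrable f P := by
    apply integrable_bdd hfm (Real.exp (t * n))
    intro S
    rw [hf]
    simp only
    rw [abs_of_pos (Real.exp_pos _), Real.exp_le_exp]
    apply mul_le_mul_of_nonneg_left _ ht0.le
    calc ∑ k, Y (S k) ≤ ∑ _k : Fin n, (1:ℝ) :=
          Finset.sum_le_sum fun k _ => (abs_le.1 (hb (S k))).2
      _ = n := by simp
  have hsub : {S : Fin n → α | a ≤ ∑ k, Y (S k)} ⊆ {S | Real.exp (t * a) ≤ f S} := by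
    intro S hS
    exact Real.exp_le_exp.2 (mul_le_mul_of_nonneg_left hS ht0.le)
  have hmarkov := mul_meas_ge_le_integral_of_nonneg (μ := P) (f := f)
    (Filter.Eventually.of_forall fun S => (Real.exp_pos _).le) hfint (Real.exp (t * a))
  have hprod : ∫ S, f S ∂P = (∫ s, Real.exp (t * Y s) ∂m) ^ n := by
    have hpi : ∫ S : Fin n → α, ∏ k, Real.exp (t * Y (S k)) ∂(volume : Measure (Fin n → α))
        = (∫ s, Real.exp (t * Y s) ∂(volume : Measure α)) ^ Fintype.card (Fin n) :=
      integral_fintype_prod_eq_pow (ι := Fin n) (fun s : α => Real.exp (t * Y s))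
    rw [volume_pi] at hpi
    have hveq : (volume : Measure α) = m := rfl
    rw [hveq] at hpi
    rw [Fintype.card_fin] at hpi
    rw [← hpi]
    apply integral_congr_ae
    filter_upwards with S
    rw [hf]
    simp only
    rw [Finset.mul_sum, Real.exp_sum]
  have hInonneg : 0 ≤ ∫ s, Real.exp (t * Y s) ∂m :=
    integral_nonneg fun s => (Real.exp_pos _).le
  have hpow : (∫ s, Real.exp (t * Y s) ∂m) ^ n ≤ M ^ n := pow_le_pow_left₀ hInonneg hM n
  have h1 : (P {S | a ≤ ∑ k, Y (S k)}).toReal ≤ (P {S | Real.exp (t * a) ≤ f S}).toReal :=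
    ENNReal.toReal_mono (measure_ne_top _ _) (measure_mono hsub)
  have h2 : Real.exp (t * a) * (P {S | Real.exp (t * a) ≤ f S}).toReal ≤ M ^ n := by
    calc Real.exp (t * a) * (P {S | Real.exp (t * a) ≤ f S}).toReal ≤ ∫ S, f S ∂P := hmarkov
      _ = (∫ s, Real.exp (t * Y s) ∂m) ^ n := hprod
      _ ≤ M ^ n := hpow
  have hepos : (0:ℝ) < Real.exp (t * a) := Real.exp_pos _
  calc (P {S | a ≤ ∑ k, Y (S k)}).toReal
      ≤ (P {S | Real.exp (t * a) ≤ f S}).toReal := h1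
    _ ≤ M ^ n / Real.exp (t * a) := by
        rw [le_div_iff₀ hepos]; rw [mul_comm] at h2; exact h2
    _ = Real.exp (-(t * a)) * M ^ n := by
        rw [Real.exp_neg]; field_simp

lemma noisyJoint_integral {X : Type*} [MeasurableSpace X] (μ : Measure X)
    (lam gstar fstar : X → ℝ) (hlam : Measurable lam) (hg : Measurable gstar)
    (hf : Measurable fstar)
    (hq0 : ∀ x, 0 ≤ 3 / 4 + gstar x * lam x / 2)
    (hq1 : ∀ x, 3 / 4 + gstar x * lam x / 2 ≤ 1)
    (F : X × ℝ → ℝ) (hF : Measurable F) (hF0 : ∀ p, 0 ≤ F p) :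
    ∫ p, F p ∂(noisyJoint μ lam gstar fstar)
      = ∫ x, (3 / 4 + gstar x * lam x / 2) * F (x, fstar x)
          + (1 - (3 / 4 + gstar x * lam x / 2)) * F (x, -(fstar x)) ∂μ := by
  have hqm : Measurable fun x => 3 / 4 + gstar x * lam x / 2 :=
    measurable_const.add ((hg.mul hlam).div_const 2)
  set κ : X → Measure (X × ℝ) := fun x =>
    ENNReal.ofReal (3 / 4 + gstar x * lam x / 2) • Measure.dirac (x, fstar x)
    + ENNReal.ofReal (1 / 4 - gstar x * lam x / 2) • Measure.dirac (x, -(fstar x)) with hκdef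
  have hqm' : Measurable fun x => 1 / 4 - gstar x * lam x / 2 :=
    measurable_const.sub ((hg.mul hlam).div_const 2)
  have hκm : Measurable κ := by
    apply Measure.measurable_of_measurable_coe
    intro s hs
    simp only [hκdef, Measure.coe_add, Pi.add_apply, Measure.smul_apply, smul_eq_mul,
      Measure.dirac_apply' _ hs]
    apply Measurable.add
    · exact (ENNReal.measurable_ofReal.comp hqm).mul
        ((measurable_one.indicator hs).comp (measurable_id.prodMk hf))
    · exact (ENNReal.measurable_ofReal.comp hqm').mul
        ((measurable_one.indicator hs).comp (measurable_id.prodMk hf.neg))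
  have hmF : Measurable fun p : X × ℝ => ENNReal.ofReal (F p) :=
    ENNReal.measurable_ofReal.comp hF
  have hbind : noisyJoint μ lam gstar fstar = μ.bind κ := rfl
  rw [hbind, integral_eq_lintegral_of_nonneg_ae (Filter.Eventually.of_forall hF0)
    hF.aestronglyMeasurable, Measure.lintegral_bind hκm.aemeasurable hmF.aemeasurable]
  have hinner : ∀ x, ∫⁻ p, ENNReal.ofReal (F p) ∂(κ x)
      = ENNReal.ofReal ((3 / 4 + gstar x * lam x / 2) * F (x, fstar x)
          + (1 - (3 / 4 + gstar x * lam x / 2)) * F (x, -(fstar x))) := by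
    intro x
    have h1q : (0:ℝ) ≤ 1 - (3 / 4 + gstar x * lam x / 2) := by linarith [hq1 x]
    have e1 : ENNReal.ofReal (1 / 4 - gstar x * lam x / 2)
        = ENNReal.ofReal (1 - (3 / 4 + gstar x * lam x / 2)) := by
      congr 1; ring
    simp only [hκdef]
    rw [lintegral_add_measure, lintegral_smul_measure, lintegral_smul_measure,
      lintegral_dirac' _ hmF, lintegral_dirac' _ hmF, e1,
      ENNReal.ofReal_add (mul_nonneg (hq0 x) (hF0 _)) (mul_nonneg h1q (hF0 _)),
      ENNReal.ofReal_mul (hq0 x), ENNReal.ofReal_mul h1q, smul_eq_mul, smul_eq_mul]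
  rw [lintegral_congr hinner]
  have hRm : Measurable fun x => (3 / 4 + gstar x * lam x / 2) * F (x, fstar x)
      + (1 - (3 / 4 + gstar x * lam x / 2)) * F (x, -(fstar x)) :=
    (hqm.mul (hF.comp (measurable_id.prodMk hf))).add
      ((measurable_const.sub hqm).mul (hF.comp (measurable_id.prodMk hf.neg)))
  have hR0 : ∀ x, 0 ≤ (3 / 4 + gstar x * lam x / 2) * F (x, fstar x)
      + (1 - (3 / 4 + gstar x * lam x / 2)) * F (x, -(fstar x)) := fun x =>
    add_nonneg (mul_nonneg (hq0 x) (hF0 _)) (mul_nonneg (by linarith [hq1 x]) (hF0 _))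
  rw [integral_eq_lintegral_of_nonneg_ae (Filter.Eventually.of_forall hR0)
    hRm.aestronglyMeasurable]

universe u

set_option maxHeartbeats 2000000 in
/-- improving the predictor via selected ERM, finite classes:
there is an absolute constant `C > 0` such that, for i.i.d. samples from the
Noisy Generative Process with finite classes `F`, `G`, a selector `ĝ ∈ G` with
`E_x[1{g* ≠ ĝ}] ≤ ε`, and `f̃` the minimizer of the `ĝ`-selected empirical risk,
if `n ≥ max(24·log(|G|/δ)/ε, 12·log(|F|/δ)/ε)` then with probability at least
`1-3δ`: `E_x[1{f̃ ≠ f*} | g* = 1] ≤ C·ε/α`, where `α = P[g*(x) = 1]`. -/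
theorem stmt19 :
    ∃ C : ℝ, 0 < C ∧
      ∀ (X : Type u) [MeasurableSpace X] (μ : Measure X) [IsProbabilityMeasure μ]
        (ιF ιG : Type) [Fintype ιF] [Fintype ιG]
        (fs : ιF → X → ℝ) (_ : ∀ i, Measurable (fs i))
        (_ : ∀ i x, fs i x = 1 ∨ fs i x = -1)
        (gs : ιG → X → ℝ) (_ : ∀ j, Measurable (gs j))
        (_ : ∀ j x, gs j x = 1 ∨ gs j x = -1)
        (istar : ιF) (jstar : ιG)
        (lb : ℝ) (_ : 0 < lb)
        (lam : X → ℝ) (_ : Measurable lam) (_ : ∀ x, lb ≤ lam x ∧ lam x ≤ 1 / 2)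
        (ν : Measure (X × ℝ)) (_ : IsProbabilityMeasure ν)
        (_ : ν = noisyJoint μ lam (gs jstar) (fs istar))
        (ε δ : ℝ) (_ : 0 < ε) (_ : 0 < δ) (_ : δ < 1)
        (jhat : ιG)
        (_ : ∫ x, ind (gs jstar x ≠ gs jhat x) ∂μ ≤ ε)
        (n : ℕ)
        (_ : 24 * Real.log ((Fintype.card ιG : ℝ) / δ) / ε ≤ (n : ℝ))
        (_ : 12 * Real.log ((Fintype.card ιF : ℝ) / δ) / ε ≤ (n : ℝ))
        (ftil : (Fin n → X × ℝ) → ιF)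
        (_ : ∀ S : Fin n → X × ℝ, ∀ i : ιF,
          (1 / (n : ℝ)) * ∑ k, ind (0 < gs jhat (S k).1)
              * ind (fs (ftil S) (S k).1 ≠ (S k).2)
            ≤ (1 / (n : ℝ)) * ∑ k, ind (0 < gs jhat (S k).1)
              * ind (fs i (S k).1 ≠ (S k).2)),
        1 - 3 * δ ≤ ((Measure.pi fun _ : Fin n => ν)
          {S | (∫ x, ind (fs (ftil S) x ≠ fs istar x) * ind (gs jstar x = 1) ∂μ)
                / (∫ x, ind (gs jstar x = 1) ∂μ)
            ≤ C * ε / (∫ x, ind (gs jstar x = 1) ∂μ)}).toReal := by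
  refine ⟨24, by norm_num, ?_⟩
  intro X _instX μ _instμ ιF ιG _instF _instG fs hfsm hfs1 gs hgsm hgs1 istar jstar
    lb hlb lam hlamm hlam ν hνP hν ε δ hε hδ hδ1 jhat hjhat n hn24 hn12 ftil hERM
  subst hν
  haveI := hνP
  set ν : Measure (X × ℝ) := noisyJoint μ lam (gs jstar) (fs istar) with hνdef
  set P : Measure (Fin n → X × ℝ) := Measure.pi fun _ : Fin n => ν with hP
  haveI : IsProbabilityMeasure P := by rw [hP]; infer_instance
  set al : ℝ := ∫ x, ind (gs jstar x = 1) ∂μ with hal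
  have hal0 : 0 ≤ al := by
    rw [hal]; exact integral_nonneg fun x => ind_nonneg _
  rcases eq_or_lt_of_le hal0 with h0 | hpos
  · -- degenerate case: α = 0, both sides of the inequality in the event are 0/0 = 0
    have hT : {S : Fin n → X × ℝ |
        (∫ x, ind (fs (ftil S) x ≠ fs istar x) * ind (gs jstar x = 1) ∂μ) / al
          ≤ 24 * ε / al} = Set.univ := by
      apply Set.eq_univ_iff_forall.2
      intro S
      simp only [Set.mem_setOf_eq, ← h0, div_zero, le_refl]
    rw [hT]
    simp only [measure_univ, ENNReal.toReal_one]
    linarith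
  -- main case : 0 < al
  -- basic value facts
  have hq0 : ∀ x, 0 ≤ 3 / 4 + gs jstar x * lam x / 2 := by
    intro x
    rcases hgs1 jstar x with h | h <;> rw [h] <;> rcases hlam x with ⟨h1, h2⟩ <;> nlinarith
  have hq1 : ∀ x, 3 / 4 + gs jstar x * lam x / 2 ≤ 1 := by
    intro x
    rcases hgs1 jstar x with h | h <;> rw [h] <;> rcases hlam x with ⟨h1, h2⟩ <;> nlinarith
  -- key functions
  set V : X × ℝ → ℝ := fun p => ind (gs jstar p.1 ≠ gs jhat p.1) with hV
  set A : ιF → X × ℝ → ℝ := fun i p => ind (0 < gs jstar p.1) * ind (fs i p.1 ≠ p.2) with hA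
  set W : ιF → X × ℝ → ℝ := fun i p => A i p - A istar p with hW
  set L : ιF → ℝ :=
    fun i => ∫ x, ind (fs i x ≠ fs istar x) * ind (gs jstar x = 1) * (1 / 2 + lam x) ∂μ with hL
  set D : ιF → ℝ := fun i => ∫ x, ind (fs i x ≠ fs istar x) * ind (gs jstar x = 1) ∂μ with hD
  clear_value ν P al V A W L D
  -- measurability
  have hVm : Measurable V := by
    rw [hV]
    exact measurable_ind ((measurableSet_eq_fun ((hgsm jstar).comp measurable_fst)
      ((hgsm jhat).comp measurable_fst)).compl)
  have hAm : ∀ i, Measurable (A i) := by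
    intro i
    simp only [hA]
    exact (measurable_ind (((hgsm jstar).comp measurable_fst) measurableSet_Ioi)).mul
      (measurable_ind ((measurableSet_eq_fun ((hfsm i).comp measurable_fst)
        measurable_snd).compl))
  have hWm : ∀ i, Measurable (W i) := by
    intro i
    simp only [hW]
    exact (hAm i).sub (hAm istar)
  have hUm : ∀ i, Measurable fun x => ind (fs i x ≠ fs istar x) := fun i =>
    measurable_ind ((measurableSet_eq_fun (hfsm i) (hfsm istar)).compl)
  have hEm : Measurable fun x => ind (gs jstar x = 1) :=
    measurable_ind (measurableSet_eq_fun (hgsm jstar) measurable_const)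
  -- bounds on values
  have hA01 : ∀ i p, 0 ≤ A i p ∧ A i p ≤ 1 := by
    intro i p
    simp only [hA]
    constructor
    · exact mul_nonneg (ind_nonneg _) (ind_nonneg _)
    · nlinarith [ind_nonneg (0 < gs jstar p.1), ind_le_one (0 < gs jstar p.1),
        ind_nonneg (fs i p.1 ≠ p.2), ind_le_one (fs i p.1 ≠ p.2)]
  have hWb : ∀ i p, |W i p| ≤ 1 := by
    intro i p
    rw [abs_le]
    simp only [hW]
    constructor
    · linarith [(hA01 i p).1, (hA01 istar p).2]
    · linarith [(hA01 i p).2, (hA01 istar p).1]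
  have hVb : ∀ p, |V p| ≤ 1 := by
    intro p; simp only [hV]; exact abs_ind_le_one _
  -- ν-integrability of the basic functions
  have hAint : ∀ i, Integrable (A i) ν :=
    fun i => integrable_bdd (hAm i) 1 fun p =>
      abs_le.2 ⟨by linarith [(hA01 i p).1], (hA01 i p).2⟩
  have hWint' : ∀ i, Integrable (W i) ν := fun i => integrable_bdd (hWm i) 1 (hWb i)
  have hWWint : ∀ i, Integrable (fun p => W i p * W i p) ν := fun i =>
    integrable_bdd ((hWm i).mul (hWm i)) 1 fun p => by
      rw [abs_mul]
      calc |W i p| * |W i p| ≤ 1 * 1 := by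
            have := hWb i p; have := abs_nonneg (W i p); nlinarith
        _ = 1 := by norm_num
  have hVint' : Integrable V ν := integrable_bdd hVm 1 hVb
  -- first moment of V
  have hVmom : ∫ p, V p ∂ν = ∫ x, ind (gs jstar x ≠ gs jhat x) ∂μ := by
    rw [hνdef, hV]
    rw [noisyJoint_integral μ lam (gs jstar) (fs istar) hlamm (hgsm jstar) (hfsm istar)
      hq0 hq1 _ (by rw [hV] at hVm; exact hVm) (fun p => ind_nonneg _)]
    apply integral_congr_ae
    filter_upwards with x
    ring
  -- first moment of W i
  have hWmom : ∀ i, ∫ p, W i p ∂ν = L i := by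
    intro i
    have hsub : ∫ p, W i p ∂ν = ∫ p, A i p ∂ν - ∫ p, A istar p ∂ν := by
      simp only [hW]
      exact integral_sub (hAint i) (hAint istar)
    have hint : ∀ j, ∫ p, A j p ∂ν
        = ∫ x, (3 / 4 + gs jstar x * lam x / 2) * A j (x, fs istar x)
            + (1 - (3 / 4 + gs jstar x * lam x / 2)) * A j (x, -(fs istar x)) ∂μ := by
      intro j
      rw [hνdef]
      exact noisyJoint_integral μ lam (gs jstar) (fs istar) hlamm (hgsm jstar) (hfsm istar)
        hq0 hq1 _ (hAm j) (fun p => (hA01 j p).1)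
    have hintg : ∀ j : ιF, Integrable (fun x =>
        (3 / 4 + gs jstar x * lam x / 2) * A j (x, fs istar x)
          + (1 - (3 / 4 + gs jstar x * lam x / 2)) * A j (x, -(fs istar x))) μ := by
      intro j
      apply integrable_bdd
      · exact ((measurable_const.add (((hgsm jstar).mul hlamm).div_const 2)).mul
          ((hAm j).comp (measurable_id.prodMk (hfsm istar)))).add
          ((measurable_const.sub
            (measurable_const.add (((hgsm jstar).mul hlamm).div_const 2))).mul
          ((hAm j).comp (measurable_id.prodMk (hfsm istar).neg)))
      · intro x
        have h1 := hA01 j (x, fs istar x)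
        have h2 := hA01 j (x, -(fs istar x))
        exact convex_bound (hq0 x) (hq1 x) h1.1 h1.2 h2.1 h2.2
    rw [hsub, hint i, hint istar, ← integral_sub (hintg i) (hintg istar), hL]
    apply integral_congr_ae
    filter_upwards with x
    simp only [hA]
    rw [ind_ne_self, ind_ne_neg (hfs1 i x) (hfs1 istar x), ind_ne_neg_self (hfs1 istar x),
      ind_pos_iff (hgs1 jstar x)]
    rcases hgs1 jstar x with h | h
    · rw [h, ind_true rfl]; ring
    · rw [h, ind_false (by norm_num : ¬ (-1 : ℝ) = 1)]; ring
  -- second moment of W i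
  have hW2mom : ∀ i, ∫ p, W i p * W i p ∂ν = D i := by
    intro i
    rw [hνdef]
    rw [noisyJoint_integral μ lam (gs jstar) (fs istar) hlamm (hgsm jstar) (hfsm istar)
      hq0 hq1 (fun p => W i p * W i p) ((hWm i).mul (hWm i)) (fun p => mul_self_nonneg _)]
    rw [hD]
    apply integral_congr_ae
    filter_upwards with x
    simp only [hW, hA]
    rw [ind_ne_self, ind_ne_neg (hfs1 i x) (hfs1 istar x), ind_ne_neg_self (hfs1 istar x),
      ind_pos_iff (hgs1 jstar x)]
    rcases ind_cases (fs i x ≠ fs istar x) with hu | hu <;>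
      rcases ind_cases (gs jstar x = 1) with he | he <;> rw [hu, he] <;> ring
  -- comparison of L and D
  have hLnn : ∀ i, 0 ≤ L i := by
    intro i
    rw [hL]
    apply integral_nonneg
    intro x
    exact mul_nonneg (mul_nonneg (ind_nonneg _) (ind_nonneg _)) (by linarith [(hlam x).1, hlb])
  have hintUE : ∀ i, Integrable (fun x => ind (fs i x ≠ fs istar x) * ind (gs jstar x = 1)) μ := by
    intro i
    apply integrable_bdd ((hUm i).mul hEm) 1
    intro x
    have h := unit_bounds (ind_nonneg (fs i x ≠ fs istar x)) (ind_le_one _)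
      (ind_nonneg (gs jstar x = 1)) (ind_le_one _)
    exact abs_le_one_of_unit h.1 h.2
  have hintUEL : ∀ i, Integrable
      (fun x => ind (fs i x ≠ fs istar x) * ind (gs jstar x = 1) * (1 / 2 + lam x)) μ := by
    intro i
    apply integrable_bdd (((hUm i).mul hEm).mul (measurable_const.add hlamm)) 1
    intro x
    rcases hlam x with ⟨h1, h2⟩
    have h := unit_bounds (ind_nonneg (fs i x ≠ fs istar x)) (ind_le_one _)
      (ind_nonneg (gs jstar x = 1)) (ind_le_one _)
    have h' := unit_bounds h.1 h.2 (show (0:ℝ) ≤ 1 / 2 + lam x by linarith [hlb])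
      (show (1:ℝ) / 2 + lam x ≤ 1 by linarith)
    exact abs_le_one_of_unit h'.1 h'.2
  have hDL : ∀ i, D i ≤ 2 * L i := by
    intro i
    have h2 : ∫ x, ind (fs i x ≠ fs istar x) * ind (gs jstar x = 1) ∂μ
        ≤ ∫ x, 2 * (ind (fs i x ≠ fs istar x) * ind (gs jstar x = 1) * (1 / 2 + lam x)) ∂μ := by
      apply integral_mono (hintUE i) ((hintUEL i).const_mul 2)
      intro x
      rcases hlam x with ⟨h1, h2⟩
      nlinarith [ind_nonneg (fs i x ≠ fs istar x), ind_le_one (fs i x ≠ fs istar x),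
        ind_nonneg (gs jstar x = 1), ind_le_one (gs jstar x = 1), hlb,
        mul_nonneg (ind_nonneg (fs i x ≠ fs istar x)) (ind_nonneg (gs jstar x = 1))]
    rw [integral_const_mul] at h2
    rw [hD, hL]
    exact h2
  -- cardinalities and sample size facts
  haveI : Nonempty ιG := ⟨jstar⟩
  haveI : Nonempty ιF := ⟨istar⟩
  have hcG1 : (1:ℝ) ≤ Fintype.card ιG := by exact_mod_cast Fintype.card_pos
  have hcF1 : (1:ℝ) ≤ Fintype.card ιF := by exact_mod_cast Fintype.card_pos
  have hlogG : 0 < Real.log ((Fintype.card ιG : ℝ) / δ) :=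
    Real.log_pos (by rw [lt_div_iff₀ hδ]; linarith)
  have hlogF : 0 < Real.log ((Fintype.card ιF : ℝ) / δ) :=
    Real.log_pos (by rw [lt_div_iff₀ hδ]; linarith)
  have hn0 : (0:ℝ) < n := lt_of_lt_of_le (by positivity) hn24
  have hnG : 24 * Real.log ((Fintype.card ιG : ℝ) / δ) ≤ (n:ℝ) * ε := by
    rw [div_le_iff₀ hε] at hn24; linarith
  have hnF : 12 * Real.log ((Fintype.card ιF : ℝ) / δ) ≤ (n:ℝ) * ε := by
    rw [div_le_iff₀ hε] at hn12; linarith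
  have hlogδ : Real.log δ < 0 := Real.log_neg hδ hδ1
  -- exponential moment of V
  have hMV : ∫ p, Real.exp (1 / 2 * V p) ∂ν ≤ Real.exp (3 / 4 * ε) := by
    have hptw : ∀ p, Real.exp (1 / 2 * V p) ≤ 1 + 3 / 4 * V p := by
      intro p
      have hz : (1:ℝ) / 2 * V p ≤ 1 := by
        have := abs_le.1 (hVb p); linarith [this.2]
      have h := exp_le_quad hz
      have hVv : V p * V p = V p := by
        simp only [hV]
        rcases ind_cases (gs jstar p.1 ≠ gs jhat p.1) with h' | h' <;> rw [h'] <;> norm_num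
      have hsq : (1 / 2 * V p) ^ 2 = 1 / 4 * (V p * V p) := by ring
      rw [hsq, hVv] at h
      linarith
    have h1 : ∫ p, Real.exp (1 / 2 * V p) ∂ν ≤ ∫ p, 1 + 3 / 4 * V p ∂ν :=
      integral_mono (integrable_exp_mul hVm hVb _)
        ((integrable_const 1).add (hVint'.const_mul _)) hptw
    have h2 : ∫ p, 1 + 3 / 4 * V p ∂ν = 1 + 3 / 4 * ∫ p, V p ∂ν := by
      rw [integral_add (integrable_const 1) (hVint'.const_mul _), integral_const,
        integral_const_mul]
      simp
    rw [h2, hVmom] at h1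
    have h3 : (1:ℝ) + 3 / 4 * ∫ x, ind (gs jstar x ≠ gs jhat x) ∂μ ≤ 1 + 3 / 4 * ε := by
      linarith [hjhat]
    have h4 := Real.add_one_le_exp (3 / 4 * ε)
    linarith
  -- exponential moment of -W i
  have hMW : ∀ i, ∫ p, Real.exp (1 / 4 * -(W i p)) ∂ν
      ≤ Real.exp (-(1 / 4) * L i + 1 / 16 * D i) := by
    intro i
    have hptw : ∀ p, Real.exp (1 / 4 * -(W i p))
        ≤ 1 + (-(1 / 4) * W i p + 1 / 16 * (W i p * W i p)) := by
      intro p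
      have hz : (1:ℝ) / 4 * -(W i p) ≤ 1 := by
        have := abs_le.1 (hWb i p); linarith [this.1]
      have h := exp_le_quad hz
      have hsq : (1 / 4 * -(W i p)) ^ 2 = 1 / 16 * (W i p * W i p) := by ring
      rw [hsq] at h
      linarith
    have hIlin : Integrable (fun p => -(1 / 4 : ℝ) * W i p + 1 / 16 * (W i p * W i p)) ν :=
      ((hWint' i).const_mul _).add ((hWWint i).const_mul _)
    have h1 : ∫ p, Real.exp (1 / 4 * -(W i p)) ∂ν
        ≤ ∫ p, 1 + (-(1 / 4) * W i p + 1 / 16 * (W i p * W i p)) ∂ν :=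
      integral_mono (integrable_exp_mul (hWm i).neg
          (fun p => by rw [Pi.neg_apply, abs_neg]; exact hWb i p) _)
        ((integrable_const 1).add hIlin) hptw
    have h2 : ∫ p, 1 + (-(1 / 4) * W i p + 1 / 16 * (W i p * W i p)) ∂ν
        = 1 + (-(1 / 4) * L i + 1 / 16 * D i) := by
      rw [integral_add (integrable_const 1) hIlin, integral_add ((hWint' i).const_mul _)
        ((hWWint i).const_mul _), integral_const_mul, integral_const_mul, integral_const,
        hWmom i, hW2mom i]
      simp
    rw [h2] at h1
    have h4 := Real.add_one_le_exp (-(1 / 4) * L i + 1 / 16 * D i)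
    linarith
  -- bad events
  set Bad1 : Set (Fin n → X × ℝ) := {S | 2 * (n:ℝ) * ε ≤ ∑ k, V (S k)} with hBad1
  set Bad2 : ιF → Set (Fin n → X × ℝ) :=
    fun i => {S | (n:ℝ) * (L i / 2 + 2 * ε) - (n:ℝ) * L i ≤ ∑ k, -(W i (S k))} with hBad2
  clear_value Bad1 Bad2
  have hB1meas : MeasurableSet Bad1 := by
    rw [hBad1]
    exact measurableSet_le measurable_const
      (Finset.measurable_sum _ fun k _ => hVm.comp (measurable_pi_apply k))
  have hB2meas : ∀ i, MeasurableSet (Bad2 i) := by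
    intro i
    simp only [hBad2]
    exact measurableSet_le measurable_const
      (Finset.measurable_sum _ fun k _ => (hWm i).neg.comp (measurable_pi_apply k))
  -- Chernoff bound for Bad1
  have hPBad1 : (P Bad1).toReal ≤ δ := by
    have hc := chernoff ν n V hVm hVb (by norm_num : (0:ℝ) < 1 / 2)
      (2 * (n:ℝ) * ε) (Real.exp (3 / 4 * ε)) hMV
    have hbound : Real.exp (-(1 / 2 * (2 * (n:ℝ) * ε))) * Real.exp (3 / 4 * ε) ^ n ≤ δ := by
      rw [← Real.exp_nat_mul, ← Real.exp_add, ← Real.exp_log hδ, Real.exp_le_exp]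
      have hlogGδ : Real.log ((Fintype.card ιG : ℝ) / δ)
          = Real.log (Fintype.card ιG) - Real.log δ :=
        Real.log_div (by positivity) (ne_of_gt hδ)
      have hlogcG : 0 ≤ Real.log (Fintype.card ιG : ℝ) := Real.log_nonneg hcG1
      rw [hlogGδ] at hnG
      linarith only [hnG, hlogcG, hlogδ]
    rw [hP, hBad1]
    exact le_trans hc hbound
  -- Chernoff bound for Bad2 i
  have hPBad2 : ∀ i, (P (Bad2 i)).toReal ≤ δ / Fintype.card ιF := by
    intro i
    have hc := chernoff ν n (fun p => -(W i p)) (hWm i).neg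
      (fun p => by rw [abs_neg]; exact hWb i p) (by norm_num : (0:ℝ) < 1 / 4)
      ((n:ℝ) * (L i / 2 + 2 * ε) - (n:ℝ) * L i)
      (Real.exp (-(1 / 4) * L i + 1 / 16 * D i)) (hMW i)
    have hcFpos : (0:ℝ) < Fintype.card ιF := by linarith only [hcF1]
    have hbound : Real.exp (-(1 / 4 * ((n:ℝ) * (L i / 2 + 2 * ε) - (n:ℝ) * L i)))
        * Real.exp (-(1 / 4) * L i + 1 / 16 * D i) ^ n ≤ δ / Fintype.card ιF := by
      rw [← Real.exp_nat_mul, ← Real.exp_add, ← Real.exp_log (show (0:ℝ) < δ / Fintype.card ιF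
        by positivity), Real.exp_le_exp]
      have hlogFδ : Real.log ((Fintype.card ιF : ℝ) / δ)
          = Real.log (Fintype.card ιF) - Real.log δ :=
        Real.log_div (by positivity) (ne_of_gt hδ)
      have hlogδF : Real.log (δ / Fintype.card ιF)
          = Real.log δ - Real.log (Fintype.card ιF) :=
        Real.log_div (ne_of_gt hδ) (by positivity)
      have hlogcF : 0 ≤ Real.log (Fintype.card ιF : ℝ) := Real.log_nonneg hcF1
      have hDLn : (n:ℝ) * D i ≤ (n:ℝ) * (2 * L i) :=
        mul_le_mul_of_nonneg_left (hDL i) hn0.le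
      rw [hlogFδ] at hnF
      rw [hlogδF]
      have e1 : -(1 / 4 * ((n:ℝ) * (L i / 2 + 2 * ε) - (n:ℝ) * L i))
          + (n:ℝ) * (-(1 / 4) * L i + 1 / 16 * D i)
          = ((n:ℝ) * D i) / 16 - ((n:ℝ) * L i) / 8 - ((n:ℝ) * ε) / 2 := by ring
      rw [e1]
      have e2 : ((n:ℝ) * D i) / 16 - ((n:ℝ) * L i) / 8 ≤ 0 := by linarith only [hDLn]
      linarith only [e2, hnF, hlogcF, hlogδ]
    rw [hP]
    simp only [hBad2]
    exact le_trans hc hbound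
  -- union bound
  set B : Set (Fin n → X × ℝ) := Bad1 ∪ ⋃ i, Bad2 i with hB
  clear_value B
  have hBmeas : MeasurableSet B := by
    rw [hB]; exact hB1meas.union (MeasurableSet.iUnion fun i => hB2meas i)
  have hcFpos : (0:ℝ) < Fintype.card ιF := by linarith only [hcF1]
  have hPBsum : P B ≤ ENNReal.ofReal δ + ∑ i : ιF, ENNReal.ofReal (δ / Fintype.card ιF) := by
    rw [hB]
    calc P (Bad1 ∪ ⋃ i, Bad2 i) ≤ P Bad1 + P (⋃ i, Bad2 i) := measure_union_le _ _
      _ ≤ P Bad1 + ∑ i : ιF, P (Bad2 i) := by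
          exact add_le_add le_rfl (measure_iUnion_fintype_le _ _)
      _ ≤ ENNReal.ofReal δ + ∑ i : ιF, ENNReal.ofReal (δ / Fintype.card ιF) := by
          apply add_le_add
          · exact (ENNReal.le_ofReal_iff_toReal_le (measure_ne_top _ _) hδ.le).2 hPBad1
          · apply Finset.sum_le_sum
            intro i _
            exact (ENNReal.le_ofReal_iff_toReal_le (measure_ne_top _ _)
              (by positivity)).2 (hPBad2 i)
  have hsumne : (∑ i : ιF, ENNReal.ofReal (δ / Fintype.card ιF)) ≠ ⊤ :=
    (ENNReal.sum_lt_top.2 fun i _ => ENNReal.ofReal_lt_top).ne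
  have hPBr : (P B).toReal ≤ 2 * δ := by
    have h1 := ENNReal.toReal_mono (ENNReal.add_ne_top.2 ⟨ENNReal.ofReal_ne_top, hsumne⟩) hPBsum
    rw [ENNReal.toReal_add ENNReal.ofReal_ne_top hsumne, ENNReal.toReal_ofReal hδ.le] at h1
    have h2 : (∑ i : ιF, ENNReal.ofReal (δ / Fintype.card ιF)).toReal
        = ∑ i : ιF, (ENNReal.ofReal (δ / Fintype.card ιF)).toReal :=
      ENNReal.toReal_sum fun i _ => ENNReal.ofReal_ne_top
    rw [h2] at h1
    have h3 : ∑ _i : ιF, (ENNReal.ofReal (δ / Fintype.card ιF)).toReal = δ := by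
      rw [ENNReal.toReal_ofReal (by positivity : (0:ℝ) ≤ δ / Fintype.card ιF)]
      rw [Finset.sum_const, Finset.card_univ, nsmul_eq_mul]
      field_simp
    rw [h3] at h1
    linarith only [h1]
  -- the good event implies the conclusion
  have hGood : Bᶜ ⊆ {S : Fin n → X × ℝ |
      (∫ x, ind (fs (ftil S) x ≠ fs istar x) * ind (gs jstar x = 1) ∂μ) / al
        ≤ 24 * ε / al} := by
    intro S hS
    rw [hB] at hS
    simp only [Set.mem_compl_iff, Set.mem_union, Set.mem_iUnion, not_or, not_exists] at hS
    obtain ⟨hS1, hS2⟩ := hS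
    rw [hBad1, Set.mem_setOf_eq, not_le] at hS1
    have hS2' : ∀ i, ∑ k, -(W i (S k)) < (n:ℝ) * (L i / 2 + 2 * ε) - (n:ℝ) * L i := by
      intro i
      have h := hS2 i
      rw [hBad2] at h
      exact not_le.1 h
    -- per-coordinate weight-swap bound
    have hkey : ∀ (i : ιF) (p : X × ℝ),
        ind (0 < gs jstar p.1) * ind (fs i p.1 ≠ p.2)
          ≤ ind (0 < gs jhat p.1) * ind (fs i p.1 ≠ p.2) + V p ∧
        ind (0 < gs jhat p.1) * ind (fs i p.1 ≠ p.2)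
          ≤ ind (0 < gs jstar p.1) * ind (fs i p.1 ≠ p.2) + V p := by
      intro i p
      simp only [hV]
      by_cases h : gs jstar p.1 = gs jhat p.1
      · rw [h]
        constructor <;> linarith only [ind_nonneg (gs jhat p.1 ≠ gs jhat p.1)]
      · rw [ind_true h]
        have h1 := unit_bounds (ind_nonneg (0 < gs jstar p.1)) (ind_le_one _)
          (ind_nonneg (fs i p.1 ≠ p.2)) (ind_le_one _)
        have h2 := unit_bounds (ind_nonneg (0 < gs jhat p.1)) (ind_le_one _)
          (ind_nonneg (fs i p.1 ≠ p.2)) (ind_le_one _)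
        constructor <;> linarith only [h1.1, h1.2, h2.1, h2.2]
    -- the ERM property at istar
    have hERM' : ∑ k, ind (0 < gs jhat (S k).1) * ind (fs (ftil S) (S k).1 ≠ (S k).2)
        ≤ ∑ k, ind (0 < gs jhat (S k).1) * ind (fs istar (S k).1 ≠ (S k).2) := by
      have h := hERM S istar
      have hn' : (0:ℝ) < 1 / (n:ℝ) := by positivity
      exact (mul_le_mul_iff_right₀ hn').1 h
    have hsum1 : ∑ k, ind (0 < gs jstar (S k).1) * ind (fs (ftil S) (S k).1 ≠ (S k).2)
        ≤ (∑ k, ind (0 < gs jhat (S k).1) * ind (fs (ftil S) (S k).1 ≠ (S k).2))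
          + ∑ k, V (S k) := by
      rw [← Finset.sum_add_distrib]
      exact Finset.sum_le_sum fun k _ => (hkey (ftil S) (S k)).1
    have hsum2 : ∑ k, ind (0 < gs jhat (S k).1) * ind (fs istar (S k).1 ≠ (S k).2)
        ≤ (∑ k, ind (0 < gs jstar (S k).1) * ind (fs istar (S k).1 ≠ (S k).2))
          + ∑ k, V (S k) := by
      rw [← Finset.sum_add_distrib]
      exact Finset.sum_le_sum fun k _ => (hkey istar (S k)).2
    have hWsum : ∑ k, W (ftil S) (S k) ≤ 2 * ∑ k, V (S k) := by
      have hsp : ∑ k, W (ftil S) (S k)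
          = (∑ k, ind (0 < gs jstar (S k).1) * ind (fs (ftil S) (S k).1 ≠ (S k).2))
            - ∑ k, ind (0 < gs jstar (S k).1) * ind (fs istar (S k).1 ≠ (S k).2) := by
        rw [← Finset.sum_sub_distrib]
        apply Finset.sum_congr rfl
        intro k _
        rw [hW, hA]
      rw [hsp]
      linarith only [hsum1, hsum2, hERM']
    have hnegsum : ∑ k, -(W (ftil S) (S k)) = -∑ k, W (ftil S) (S k) := by
      rw [Finset.sum_neg_distrib]
    have hLj : L (ftil S) < 12 * ε := by
      have h2 := hS2' (ftil S)
      rw [hnegsum] at h2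
      have hx : (n:ℝ) * (L (ftil S) / 2) < (n:ℝ) * (6 * ε) := by
        nlinarith only [h2, hWsum, hS1]
      have := (mul_lt_mul_iff_right₀ hn0).1 hx
      linarith only [this]
    have hDj : D (ftil S) < 24 * ε := by
      linarith only [hDL (ftil S), hLj]
    simp only [Set.mem_setOf_eq]
    rw [div_le_div_iff_of_pos_right hpos]
    have hnum : (∫ x, ind (fs (ftil S) x ≠ fs istar x) * ind (gs jstar x = 1) ∂μ)
        = D (ftil S) := by rw [hD]
    rw [hnum]
    exact hDj.le
  -- conclusion
  have hfin1 : (P Bᶜ).toReal ≤ (P {S : Fin n → X × ℝ |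
      (∫ x, ind (fs (ftil S) x ≠ fs istar x) * ind (gs jstar x = 1) ∂μ) / al
        ≤ 24 * ε / al}).toReal :=
    ENNReal.toReal_mono (measure_ne_top _ _) (measure_mono hGood)
  have hfin2 : (P Bᶜ).toReal = 1 - (P B).toReal := by
    have hadd : P B + P Bᶜ = 1 := by
      rw [measure_add_measure_compl hBmeas, measure_univ]
    have := congrArg ENNReal.toReal hadd
    rw [ENNReal.toReal_add (measure_ne_top _ _) (measure_ne_top _ _), ENNReal.toReal_one] at this
    linarith only [this]
  linarith only [hfin1, hfin2, hPBr, hδ]
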